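/- arXiv:2012.15007 — 8 statements merged into one kernel-verified Lean document; each statement's English description precedes it below -/
import Mathlib

section
/- Define ψ(κ) = (1/((1-κ)²/(κ²+(1-κ)²)·σ_ε²)) / (1/(σ_ω² + κ²/(κ²+(1-κ)²)·σ_ε²) + 1/((1-κ)²/(κ²+(1-κ)²)·σ_ε²)) for κ ∈ [0,1) and ψ(1)=1, where σ_ω², σ_ε² > 0. Then ψ is strictly increasing on [0,1], ψ(0) = (1/σ_ε²)/(1/σ_ω² + 1/σ_ε²) > 0, and ψ(κ) → 1 as κ → 1. -/
/-!
Writing `w κ = κ² / (κ² + (1-κ)²)` for the share of the noise that is common to both signals,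
the two precisions in `ψ` are those of variances `σ_ω² + w σ_ε²` and `(1 - w) σ_ε²`, which add
up to `σ_ω² + σ_ε²`. Hence `ψ = (σ_ω² + w σ_ε²) / (σ_ω² + σ_ε²)` on all of `[0, 1]`, an
increasing affine function of `w`, and `w` increases strictly from `0` to `1` on `[0, 1]`.
-/

open Set Filter Topology

noncomputable def commonWeight (κ : ℝ) : ℝ := κ ^ 2 / (κ ^ 2 + (1 - κ) ^ 2)

lemma sq_add_one_sub_sq_pos (κ : ℝ) : 0 < κ ^ 2 + (1 - κ) ^ 2 := by
  nlinarith [sq_nonneg (2 * κ - 1)]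

@[simp] lemma commonWeight_one : commonWeight 1 = 1 := by norm_num [commonWeight]

lemma one_sub_commonWeight (κ : ℝ) :
    1 - commonWeight κ = (1 - κ) ^ 2 / (κ ^ 2 + (1 - κ) ^ 2) := by
  have := (sq_add_one_sub_sq_pos κ).ne'
  rw [commonWeight]
  field_simp
  ring

lemma continuous_commonWeight : Continuous commonWeight :=
  Continuous.div (by fun_prop) (by fun_prop) fun κ => (sq_add_one_sub_sq_pos κ).ne'

lemma strictMonoOn_commonWeight : StrictMonoOn commonWeight (Icc 0 1) := by
  intro a ha b hb hab
  rw [commonWeight, commonWeight, div_lt_div_iff₀ (sq_add_one_sub_sq_pos a)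
    (sq_add_one_sub_sq_pos b)]
  -- after cancelling `a² b²` this is `(a (1-b))² < (b (1-a))²`
  have hlt : a * (1 - b) < b * (1 - a) := by nlinarith
  have hnonneg : 0 ≤ a * (1 - b) := mul_nonneg ha.1 (by linarith [hb.2])
  nlinarith

lemma one_div_div_one_div_add_one_div {A B : ℝ} (hA : A ≠ 0) (hB : B ≠ 0) :
    (1 / A) / (1 / B + 1 / A) = B / (B + A) := by
  rw [one_div_add_one_div hB hA]
  field_simp

lemma psi_formula_eq {σω2 σε2 κ : ℝ} (hω : 0 < σω2) (hε : 0 < σε2) (hκ : κ < 1) :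
    (1 / ((1-κ)^2 / (κ^2 + (1-κ)^2) * σε2)) /
      (1 / (σω2 + κ^2 / (κ^2 + (1-κ)^2) * σε2) + 1 / ((1-κ)^2 / (κ^2 + (1-κ)^2) * σε2)) =
      (σω2 + σε2 * commonWeight κ) / (σω2 + σε2) := by
  have hD := sq_add_one_sub_sq_pos κ
  have hA : 0 < (1-κ)^2 / (κ^2 + (1-κ)^2) * σε2 :=
    mul_pos (div_pos (pow_pos (sub_pos.2 hκ) 2) hD) hε
  have hB : 0 < σω2 + κ^2 / (κ^2 + (1-κ)^2) * σε2 := by positivity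
  rw [one_div_div_one_div_add_one_div hA.ne' hB.ne', ← one_sub_commonWeight,
    ← commonWeight]
  ring_nf

/-- properties of the conditional-expectation coefficient ψ(κ) in the LQN game. -/
theorem psi_properties (σω2 σε2 : ℝ) (hω : 0 < σω2) (hε : 0 < σε2)
    (ψ : ℝ → ℝ)
    (hψ : ∀ κ ∈ Set.Ico (0:ℝ) 1, ψ κ =
      (1 / ((1-κ)^2 / (κ^2 + (1-κ)^2) * σε2)) /
      (1 / (σω2 + κ^2 / (κ^2 + (1-κ)^2) * σε2) + 1 / ((1-κ)^2 / (κ^2 + (1-κ)^2) * σε2)))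
    (hψ1 : ψ 1 = 1) :
    StrictMonoOn ψ (Set.Icc 0 1) ∧
    ψ 0 = (1/σε2) / (1/σω2 + 1/σε2) ∧
    0 < ψ 0 ∧
    Filter.Tendsto ψ (nhdsWithin 1 (Set.Iio 1)) (nhds 1) := by
  set φ : ℝ → ℝ := fun κ => (σω2 + σε2 * commonWeight κ) / (σω2 + σε2)
  have hsum : 0 < σω2 + σε2 := add_pos hω hε
  have hφψ : EqOn φ ψ (Icc 0 1) := by
    rintro κ ⟨hκ0, hκ1⟩
    rcases hκ1.eq_or_lt with rfl | hκ1
    · simp [φ, hψ1, hsum.ne']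
    · rw [hψ κ ⟨hκ0, hκ1⟩, psi_formula_eq hω hε hκ1]
  have hψ0 : ψ 0 = (1/σε2) / (1/σω2 + 1/σε2) := by
    rw [hψ 0 ⟨le_rfl, one_pos⟩]
    norm_num
  refine ⟨?mono, hψ0, ?pos, ?lim⟩
  case mono =>
    refine StrictMonoOn.congr (fun a ha b hb hab => ?_) hφψ
    exact div_lt_div_of_pos_right (by nlinarith [strictMonoOn_commonWeight ha hb hab]) hsum
  case pos => rw [hψ0]; positivity
  case lim =>
    have hφ : Tendsto φ (𝓝[<] 1) (𝓝 1) := by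
      have := ((continuous_commonWeight.const_smul σε2).const_add σω2).div_const (σω2 + σε2)
      simpa [φ, hsum.ne'] using this.continuousAt (x := 1) |>.continuousWithinAt.tendsto
    exact hφ.congr' (hφψ.eventuallyEq_of_mem (mem_of_superset (Ioo_mem_nhdsLT one_pos)
      Ioo_subset_Icc_self))
end

section
/- Suppose player i with perceived correlation parameter κ (yielding E_κ[s_{-i}|s_i] = ψ(κ)s_i) observes data generated under true elasticity r° and true correlation κ° (yielding E_{κ°}[s_{-i}|s_i] = ψ(κ°)s_i), with both players using linear strategies α_i, α_{-i} ≥ 0 not both zero. Then the unique elasticity belief r̂ matching the conditional mean of prices for every signal s_i — i.e. solving γ − (1/2)r̂α_i − (1/2)r̂α_{-i}ψ(κ) = γ − (1/2)r°α_i − (1/2)r°α_{-i}ψ(κ°) — is r̂ = r°·(α_i + α_{-i}ψ(κ°))/(α_i + α_{-i}ψ(κ)). Moreover, if α_{-i} > 0 then r̂ is strictly decreasing in ψ(κ), so projection bias (ψ(κ) > ψ(κ°)) yields r̂ < r° and correlation neglect (ψ(κ) < ψ(κ°)) yields r̂ > r°. -/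
/-!
Given the signal, the conditional mean price is affine in it with slope `-(r/2)(αᵢ + α₋ᵢ ψ)`, so
matching means for every signal pins `r̂ (αᵢ + α₋ᵢ ψ) = r° (αᵢ + α₋ᵢ ψ(κ°))`. The resulting map
`ψ ↦ r° (αᵢ + α₋ᵢ ψ(κ°)) / (αᵢ + α₋ᵢ ψ)` is strictly decreasing and takes the value `r°` at
`ψ = ψ(κ°)`, which gives both comparisons.
-/

lemma add_mul_pos_of_nonneg_of_ne_zero {a b x : ℝ} (ha : 0 ≤ a) (hb : 0 ≤ b) (hx : 0 < x)
    (hab : a ≠ 0 ∨ b ≠ 0) : 0 < a + b * x := by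
  rcases hab with ha' | hb'
  · have := mul_nonneg hb hx.le
    have := ha.lt_of_ne' ha'
    linarith
  · have := mul_pos (hb.lt_of_ne' hb') hx
    linarith

lemma price_mean_eq_iff {γ r rhat ψ ψ0 αi αm : ℝ} (hden : αi + αm * ψ ≠ 0) :
    γ - (1/2) * rhat * αi - (1/2) * rhat * αm * ψ = γ - (1/2) * r * αi - (1/2) * r * αm * ψ0
      ↔ rhat = r * (αi + αm * ψ0) / (αi + αm * ψ) := by
  rw [eq_div_iff hden]
  constructor <;> intro h <;> linarith

lemma strictAntiOn_div_add_mul {c a b : ℝ} (hc : 0 < c) (ha : 0 ≤ a) (hb : 0 < b) :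
    StrictAntiOn (fun x : ℝ => c / (a + b * x)) (Set.Ioi 0) := by
  intro x hx y _ hxy
  have hx' : 0 < a + b * x := add_mul_pos_of_nonneg_of_ne_zero ha hb.le hx (Or.inr hb.ne')
  exact div_lt_div_of_pos_left hc hx' (by gcongr)

theorem elasticity_inference_general (γ r ψ ψ0 αi αm : ℝ) (hr : 0 < r)
    (hψ : ψ ∈ Set.Ioc (0:ℝ) 1) (hψ0 : ψ0 ∈ Set.Ioc (0:ℝ) 1)
    (hαi : 0 ≤ αi) (hαm : 0 ≤ αm) (hne : αi ≠ 0 ∨ αm ≠ 0) :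
    (∀ rhat : ℝ,
      (γ - (1/2) * rhat * αi - (1/2) * rhat * αm * ψ
        = γ - (1/2) * r * αi - (1/2) * r * αm * ψ0)
      ↔ rhat = r * (αi + αm * ψ0) / (αi + αm * ψ)) ∧
    (0 < αm →
      StrictAntiOn (fun ψv : ℝ => r * (αi + αm * ψ0) / (αi + αm * ψv)) (Set.Ioi 0) ∧
      (ψ0 < ψ → r * (αi + αm * ψ0) / (αi + αm * ψ) < r) ∧
      (ψ < ψ0 → r < r * (αi + αm * ψ0) / (αi + αm * ψ))) := by
  have hden : 0 < αi + αm * ψ := add_mul_pos_of_nonneg_of_ne_zero hαi hαm hψ.1 hne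
  have hnum : 0 < αi + αm * ψ0 := add_mul_pos_of_nonneg_of_ne_zero hαi hαm hψ0.1 hne
  refine ⟨fun rhat => price_mean_eq_iff hden.ne', fun hαm_pos => ?_⟩
  have hanti := strictAntiOn_div_add_mul (mul_pos hr hnum) hαi hαm_pos
  have htrue : r * (αi + αm * ψ0) / (αi + αm * ψ0) = r := mul_div_cancel_right₀ r hnum.ne'
  exact ⟨hanti, fun h => (hanti hψ0.1 hψ.1 h).trans_eq htrue,
    fun h => htrue.symm.trans_lt (hanti hψ.1 hψ0.1 h)⟩

/-- the unique elasticity inference matching conditional price means is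
r̂ = r°(α_i + α_{-i}ψ(κ°))/(α_i + α_{-i}ψ(κ)); it is strictly decreasing in the perceived
correlation coefficient ψ(κ), so projection bias yields r̂ < r° and correlation neglect r̂ > r°. -/
theorem elasticity_inference (γ r ψ ψ0 αi αm : ℝ) (hγ : 0 < γ) (hr : 0 < r)
    (hψ : ψ ∈ Set.Ioc (0:ℝ) 1) (hψ0 : ψ0 ∈ Set.Ioc (0:ℝ) 1)
    (hαi : 0 ≤ αi) (hαm : 0 ≤ αm) (hne : αi ≠ 0 ∨ αm ≠ 0) :
    (∀ rhat : ℝ,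
      (γ - (1/2) * rhat * αi - (1/2) * rhat * αm * ψ
        = γ - (1/2) * r * αi - (1/2) * r * αm * ψ0)
      ↔ rhat = r * (αi + αm * ψ0) / (αi + αm * ψ)) ∧
    (0 < αm →
      StrictAntiOn (fun ψv : ℝ => r * (αi + αm * ψ0) / (αi + αm * ψv)) (Set.Ioi 0) ∧
      (ψ0 < ψ → r * (αi + αm * ψ0) / (αi + αm * ψ) < r) ∧
      (ψ < ψ0 → r < r * (αi + αm * ψ0) / (αi + αm * ψ))) :=
  elasticity_inference_general γ r ψ ψ0 αi αm hr hψ hψ0 hαi hαm hne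
end

section
/- For all κ ∈ [0,1]: γ/(1 + (r°/2)(1+ψ(κ°)) + (r°/2)·(1+ψ(κ°))/(1+ψ(κ))) > γ/(1 + r° + r°ψ(κ°)) = α_TEAM, where γ > 0, r° > 0, and ψ: [0,1] → (0,1] is strictly increasing with ψ(0) > 0. Consequently, since the symmetric objective payoff V is strictly decreasing above α_TEAM and the left-hand side is strictly increasing in κ, the equilibrium fitness under perfectly assortative matching is strictly decreasing in κ. -/
/-!
The assortative coefficient is `γ / D(ψ κ)` with
`D(p) = 1 + (r/2)(1 + ψ κ₀) + (r/2)(1 + ψ κ₀)/(1 + p)`. Since `1/(1 + p) < 1` for `p > 0`,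
`D(p) < 1 + r(1 + ψ κ₀)`, the team denominator, so the coefficient exceeds `α_TEAM`; and `D` is
strictly decreasing in `p`, so the coefficient increases with `κ`. The payoff
`V(α) = E[s²](αγ - c α²/2)` is a concave quadratic with vertex `α_TEAM = γ/c`, hence strictly
decreasing on `[α_TEAM, ∞)`, where all the assortative coefficients lie.
-/

open Set

/-- The symmetric equilibrium coefficient `α_gg` under perfectly assortative matching, as a
function of `ψ κ₀ = p₀` and `ψ κ = p`. -/
noncomputable def assortativeCoeff (γ r p₀ p : ℝ) : ℝ :=
  γ / (1 + r / 2 * (1 + p₀) + r / 2 * ((1 + p₀) / (1 + p)))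

section

variable {γ r p₀ : ℝ}

lemma assortative_denom_pos (hr : 0 ≤ r) (hp₀ : 0 < 1 + p₀) {p : ℝ} (hp : 0 < 1 + p) :
    0 < 1 + r / 2 * (1 + p₀) + r / 2 * ((1 + p₀) / (1 + p)) := by
  linarith [mul_nonneg hr hp₀.le, mul_nonneg hr (div_pos hp₀ hp).le]

lemma div_team_lt_assortativeCoeff (hγ : 0 < γ) (hr : 0 < r) (hp₀ : 0 < 1 + p₀) {p : ℝ}
    (hp : 0 < p) : γ / (1 + r + r * p₀) < assortativeCoeff γ r p₀ p := by
  have hfrac : (1 + p₀) / (1 + p) < 1 + p₀ := div_lt_self hp₀ (by linarith)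
  refine div_lt_div_of_pos_left hγ (assortative_denom_pos hr.le hp₀ (by linarith)) ?_
  linarith [mul_lt_mul_of_pos_left hfrac hr]

lemma assortativeCoeff_strictMonoOn (hγ : 0 < γ) (hr : 0 < r) (hp₀ : 0 < 1 + p₀) :
    StrictMonoOn (assortativeCoeff γ r p₀) (Ioi (-1)) := by
  intro p hp q hq hpq
  have hp' : 0 < 1 + p := by linarith [mem_Ioi.mp hp]
  refine div_lt_div_of_pos_left hγ (assortative_denom_pos hr.le hp₀ (by linarith)) ?_
  gcongr

end

lemma strictAntiOn_concave_quadratic {E c : ℝ} (γ : ℝ) (hE : 0 < E) (hc : 0 < c) :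
    StrictAntiOn (fun α => E * (α * γ - 1 / 2 * c * α ^ 2)) (Ici (γ / c)) := by
  intro x hx y hy hxy
  have hx' : γ ≤ c * x := by rwa [mem_Ici, div_le_iff₀' hc] at hx
  have hy' : γ < c * y := by nlinarith [mem_Ici.mp hy]
  have hgap : 0 < c / 2 * (x + y) - γ := by nlinarith
  nlinarith [mul_pos hE (mul_pos (sub_pos.2 hxy) hgap)]

/-- the assortative-matching equilibrium coefficient α_{gg}(κ) exceeds the
team solution α_TEAM = γ/(1+r°+r°ψ(κ°)) for every κ ∈ [0,1]; consequently, since the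
symmetric objective payoff V is strictly decreasing above α_TEAM and α_{gg}(κ) is
strictly increasing in κ, equilibrium fitness is strictly decreasing in κ. -/
theorem assortative_fitness_decreasing (Es2 γ r : ℝ) (ψ : ℝ → ℝ)
    (hE : 0 < Es2) (hγ : 0 < γ) (hr : 0 < r)
    (hmono : StrictMonoOn ψ (Set.Icc 0 1))
    (hrange : ∀ κ ∈ Set.Icc (0:ℝ) 1, ψ κ ∈ Set.Ioc (0:ℝ) 1)
    (κ0 : ℝ) (hκ0 : κ0 ∈ Set.Icc (0:ℝ) 1)
    (V : ℝ → ℝ)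
    (hV : ∀ α, V α = Es2 * (α * γ - (1/2) * (r + r * ψ κ0 + 1) * α^2)) :
    (∀ κ ∈ Set.Icc (0:ℝ) 1,
      γ / (1 + r/2 * (1 + ψ κ0) + r/2 * ((1 + ψ κ0) / (1 + ψ κ)))
        > γ / (1 + r + r * ψ κ0)) ∧
    StrictAntiOn
      (fun κ => V (γ / (1 + r/2 * (1 + ψ κ0) + r/2 * ((1 + ψ κ0) / (1 + ψ κ)))))
      (Set.Icc 0 1) := by
  have hp₀ : 0 < 1 + ψ κ0 := by linarith [(hrange κ0 hκ0).1]
  have hteam : ∀ κ ∈ Icc (0:ℝ) 1, γ / (1 + r + r * ψ κ0) < assortativeCoeff γ r (ψ κ0) (ψ κ) :=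
    fun κ hκ => div_team_lt_assortativeCoeff hγ hr hp₀ (hrange κ hκ).1
  refine ⟨hteam, ?_⟩
  obtain rfl : V = _ := funext hV
  have hc : 1 + r + r * ψ κ0 = r + r * ψ κ0 + 1 := by ring
  refine (strictAntiOn_concave_quadratic γ hE (by linarith [mul_pos hr hp₀])).comp_strictMonoOn
    ((assortativeCoeff_strictMonoOn hγ hr hp₀).comp hmono ?_) fun κ hκ => ?_
  · exact fun κ hκ => mem_Ioi.mpr (by linarith [(hrange κ hκ).1])
  · exact mem_Ici.mpr (hc ▸ hteam κ hκ).le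
end

section
/- Let α_AA = γ/(1 + r° + (1/2)r°ψ(κ°)) be the symmetric rational equilibrium coefficient, and let Ū(α) = E[s²]·(αγ − (1/2)r°α² − (1/2)r°ψ(κ°)·α·(γ − (1/2)r°ψ(κ°)α)/(1+r°) − (1/2)α²) be the objective payoff of playing α against a rational best responder. Then Ū′(α_AA) = E[s²]·(r°ψ(κ°)/2)·(γψ(κ°)r°/2)/((1+r°)(1+r°+(1/2)ψ(κ°)r°)) > 0. In particular, marginally more aggressive play than the symmetric Nash coefficient strictly raises objective payoff against a rational best responder. -/
/-!
Write `Ū(α) = U(α, BR(α))`, where `U(α, β)` is the payoff of `α` against an opponent playing `β`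
and `BR` is the rational best reply. By the chain rule
`Ū′(α) = ∂₁U(α, BR α) + ∂₂U(α, BR α) · BR′(α)`. At the symmetric equilibrium `α_AA` we have
`BR(α_AA) = α_AA`, so the own-effect `∂₁U` vanishes by the equilibrium first-order condition and
only the strategic effect `∂₂U · BR′ = (-(1/2) r ψ α_AA) · (-(1/2) r ψ / (1 + r))` survives;
it is positive because both factors are negative.
-/

noncomputable section

namespace CournotLQN

variable (Es2 γ r ψ : ℝ)

def payoff (α β : ℝ) : ℝ :=
  Es2 * (α * γ - (1/2) * r * α^2 - (1/2) * r * ψ * α * β - (1/2) * α^2)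

def bestReply (α : ℝ) : ℝ := (γ - (1/2) * r * ψ * α) / (1 + r)

def symmetricEquilibrium : ℝ := γ / (1 + r + (1/2) * r * ψ)

theorem hasDerivAt_bestReply (α : ℝ) :
    HasDerivAt (bestReply γ r ψ) (-((1/2) * r * ψ) / (1 + r)) α := by
  have h := ((hasDerivAt_id' (x := α)).const_mul ((1/2) * r * ψ)).const_sub γ |>.div_const (1 + r)
  exact h.congr_deriv (by ring)

theorem hasDerivAt_payoff_comp {g : ℝ → ℝ} {g' α : ℝ} (hg : HasDerivAt g g' α) :
    HasDerivAt (fun a => payoff Es2 γ r ψ a (g a))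
      (Es2 * ((γ - (1 + r) * α - (1/2) * r * ψ * g α) - (1/2) * r * ψ * α * g')) α := by
  have hα := hasDerivAt_id' (x := α)
  have hsq := hasDerivAt_pow 2 α
  have h := ((((hα.mul_const γ).fun_sub (hsq.const_mul ((1/2) * r))).fun_sub
    ((hα.const_mul ((1/2) * r * ψ)).fun_mul hg)).fun_sub (hsq.const_mul (1/2))).const_mul Es2
  refine h.congr_deriv ?_
  push_cast
  ring

theorem symmetricEquilibrium_firstOrder (h : 1 + r + (1/2) * r * ψ ≠ 0) :
    γ - (1 + r) * symmetricEquilibrium γ r ψ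
      - (1/2) * r * ψ * symmetricEquilibrium γ r ψ = 0 := by
  unfold symmetricEquilibrium
  linear_combination -mul_div_cancel₀ γ h

theorem bestReply_symmetricEquilibrium (h : 1 + r + (1/2) * r * ψ ≠ 0) (hr : 1 + r ≠ 0) :
    bestReply γ r ψ (symmetricEquilibrium γ r ψ) = symmetricEquilibrium γ r ψ := by
  rw [bestReply, div_eq_iff hr]
  linear_combination symmetricEquilibrium_firstOrder γ r ψ h

end CournotLQN

end

open CournotLQN in
/-- the derivative of the objective payoff against a rational best responder,
evaluated at the symmetric rational equilibrium coefficient α_AA, equals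
E[s²](r°ψ/2)(γψr°/2)/((1+r°)(1+r°+(1/2)ψr°)) and is strictly positive. -/
theorem derivative_at_nash_positive (Es2 γ r ψ : ℝ) (hE : 0 < Es2) (hγ : 0 < γ)
    (hr : 0 < r) (hψ : ψ ∈ Set.Ioc (0:ℝ) 1)
    (Ubar : ℝ → ℝ)
    (hUbar : ∀ α, Ubar α = Es2 * (α * γ - (1/2) * r * α^2
      - (1/2) * r * ψ * α * ((γ - (1/2) * r * ψ * α) / (1 + r)) - (1/2) * α^2)) :
    HasDerivAt Ubar
      (Es2 * ((r * ψ / 2) * ((γ * ψ * r / 2) / ((1 + r) * (1 + r + (1/2) * ψ * r)))))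
      (γ / (1 + r + (1/2) * r * ψ)) ∧
    0 < Es2 * ((r * ψ / 2) * ((γ * ψ * r / 2) / ((1 + r) * (1 + r + (1/2) * ψ * r)))) := by
  have hψ0 := hψ.1
  have h1r : 1 + r ≠ 0 := by positivity
  have hden : 1 + r + (1/2) * r * ψ ≠ 0 := by positivity
  have hU : Ubar = fun α => payoff Es2 γ r ψ α (bestReply γ r ψ α) := funext hUbar
  refine ⟨?_, by positivity⟩
  have h := hasDerivAt_payoff_comp Es2 γ r ψ
    (hasDerivAt_bestReply γ r ψ (symmetricEquilibrium γ r ψ))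
  rw [bestReply_symmetricEquilibrium γ r ψ hden h1r,
    symmetricEquilibrium_firstOrder γ r ψ hden, ← hU, symmetricEquilibrium] at h
  convert h using 1
  field_simp
  ring
end

section
/- Let H(x) = x²(−1−r°) + x·ℓ(x)·(−ψ(κ) − (1/2)r°ψ(κ) − r°ψ(κ°)) − ℓ(x)²·((1/2)r°ψ(κ°)ψ(κ)) + γ(x + ℓ(x)ψ(κ)), where ℓ(x) = (γ − (1/2)r°ψ(κ°)x)/(1+r°), γ > 0, r° > 0, ψ(κ°), ψ(κ) ∈ (0,1]. At κ = κ° (i.e. ψ(κ) = ψ(κ°)): (a) x* = γ/(1 + r° + (1/2)r°ψ(κ°)) is a root of H; (b) H(0) ≠ 0 and H(γ/((1/2)r°ψ(κ°))) ≠ 0; (c) H′(x*) < 0, so x* is a simple root. -/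
/-!
Substituting `ℓ` and writing `d = 1 + r°`, `c = (1/2) r° ψ(κ°)`, the quadratic `H` factors as
`(d - c) ((d + c) x - γ) ((c ψ - d) x - γ ψ) / d²`. The root `x* = γ / (d + c)` is the zero of the
first linear factor, so `H′(x*)` is `(d - c)(d + c)/d²` times the second factor at `x*`, namely
`-γ d (1 + ψ) / (d + c)`; since `0 < c < d`, everything has a definite sign.
-/

noncomputable def factoredH (γ ψ d c x : ℝ) : ℝ :=
  (d - c) * ((d + c) * x - γ) * ((c * ψ - d) * x - γ * ψ) / d ^ 2

section factoredH

variable {γ ψ d c : ℝ}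

theorem factoredH_root (hdc : d + c ≠ 0) : factoredH γ ψ d c (γ / (d + c)) = 0 := by
  simp [factoredH, mul_div_cancel₀ γ hdc]

theorem factoredH_zero : factoredH γ ψ d c 0 = γ ^ 2 * ψ * (d - c) / d ^ 2 := by
  unfold factoredH
  ring

theorem factoredH_div (hd : d ≠ 0) (hc : c ≠ 0) :
    factoredH γ ψ d c (γ / c) = -(γ ^ 2 * (d - c) / c ^ 2) := by
  unfold factoredH
  field_simp
  ring

theorem hasDerivAt_factoredH_root (hd : d ≠ 0) (hdc : d + c ≠ 0) :
    HasDerivAt (factoredH γ ψ d c) (-(γ * (1 + ψ) * (d - c) / d)) (γ / (d + c)) := by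
  have hlin (a b : ℝ) : HasDerivAt (fun x => a * x - b) a (γ / (d + c)) := by
    simpa using ((hasDerivAt_id _).const_mul a).sub_const b
  have hprod :=
    (((hlin (d + c) γ).const_mul (d - c)).mul (hlin (c * ψ - d) (γ * ψ))).div_const (d ^ 2)
  exact hprod.congr_deriv (by field_simp; ring)

end factoredH

theorem H_eq_factoredH {γ r ψ : ℝ} {l H : ℝ → ℝ} (hr : 1 + r ≠ 0)
    (hl : ∀ x, l x = (γ - (1/2) * r * ψ * x) / (1 + r))
    (hH : ∀ x, H x = x^2 * (-1 - r)
      + x * l x * (-ψ - (1/2) * r * ψ - r * ψ)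
      - (l x)^2 * ((1/2) * r * ψ * ψ)
      + γ * (x + l x * ψ)) :
    H = factoredH γ ψ (1 + r) ((1/2) * r * ψ) := by
  funext x
  rw [hH, hl, factoredH]
  field_simp
  ring

/-- at κ = κ° the polynomial H characterizing the mutant's equilibrium
coefficient has x* = γ/(1 + r° + (1/2)r°ψ(κ°)) as a root, no root at 0 or at
γ/((1/2)r°ψ(κ°)), and H′(x*) < 0, so x* is a simple root. -/
theorem H_simple_root (γ r ψ : ℝ) (hγ : 0 < γ) (hr : 0 < r)
    (hψ : ψ ∈ Set.Ioc (0:ℝ) 1)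
    (l H : ℝ → ℝ)
    (hl : ∀ x, l x = (γ - (1/2) * r * ψ * x) / (1 + r))
    (hH : ∀ x, H x = x^2 * (-1 - r)
      + x * l x * (-ψ - (1/2) * r * ψ - r * ψ)
      - (l x)^2 * ((1/2) * r * ψ * ψ)
      + γ * (x + l x * ψ)) :
    H (γ / (1 + r + (1/2) * r * ψ)) = 0 ∧
    H 0 ≠ 0 ∧
    H (γ / ((1/2) * r * ψ)) ≠ 0 ∧
    deriv H (γ / (1 + r + (1/2) * r * ψ)) < 0 := by
  obtain ⟨hψ0, hψ1⟩ := hψ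
  have hd : 0 < 1 + r := by linarith
  have hc : 0 < (1/2) * r * ψ := by positivity
  have hcd : 0 < 1 + r - (1/2) * r * ψ := by nlinarith
  rw [H_eq_factoredH hd.ne' hl hH]
  refine ⟨factoredH_root (by positivity), ?_, ?_, ?_⟩
  · rw [factoredH_zero]
    positivity
  · rw [factoredH_div hd.ne' hc.ne', neg_ne_zero]
    positivity
  · rw [(hasDerivAt_factoredH_root hd.ne' (by positivity)).deriv, neg_lt_zero]
    positivity
end

section
/- Without the learning channel, the equilibrium coefficient of a dogmatic mutant with correct elasticity r° but perceived correlation κ, playing against a rational best responder, is α_BA(κ) = γ(1 + r° − (1/2)ψ(κ)r°) / (1 + 2r° + (r°)² − (1/4)ψ(κ)ψ(κ°)(r°)²), i.e. the unique solution of x = (γ − (1/2)r°ψ(κ)·(γ − (1/2)r°ψ(κ°)x)/(1+r°))/(1+r°). Its derivative in ψ(κ) at ψ(κ) = ψ(κ°) has the sign of (1/4)r°(1+r°)γ(−2(1+r°) + ψ(κ°)r°), which is strictly negative for γ > 0, r° > 0, ψ(κ°) ∈ (0,1]. -/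
/-!
Composing the two linear best replies gives a linear fixed-point equation for the mutant's
coefficient whose slope, `(1/4) ψ ψ° r² / (1 + r)²`, is below one; this yields the closed form.
The derivative in `ψ` follows from the quotient rule, and its numerator is negative because
`ψ° r ≤ 2r < 2 (1 + r)`.
-/

namespace NoLearning

noncomputable def linearBestReply (γ r ψ a : ℝ) : ℝ := (γ - (1/2) * r * ψ * a) / (1 + r)

noncomputable def equilibriumCoeff (γ r ψ0 ψ : ℝ) : ℝ :=
  γ * (1 + r - (1/2) * ψ * r) / (1 + 2*r + r^2 - (1/4) * ψ * ψ0 * r^2)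

lemma equilibriumCoeff_denom_pos {r ψ ψ0 : ℝ} (hr : 0 ≤ r) (hψ : ψ * ψ0 ≤ 1) :
    0 < 1 + 2*r + r^2 - (1/4) * ψ * ψ0 * r^2 := by
  nlinarith [mul_nonneg (sub_nonneg.mpr hψ) (sq_nonneg r)]

lemma eq_linearBestReply_comp_iff {γ r ψ ψ0 : ℝ} (hr : 1 + r ≠ 0)
    (hD : 1 + 2*r + r^2 - (1/4) * ψ * ψ0 * r^2 ≠ 0) (x : ℝ) :
    x = linearBestReply γ r ψ (linearBestReply γ r ψ0 x) ↔ x = equilibriumCoeff γ r ψ0 ψ := by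
  unfold linearBestReply equilibriumCoeff
  rw [eq_div_iff hr, eq_div_iff hD]
  constructor <;> intro h
  · field_simp at h
    linear_combination (1/4) * h
  · field_simp
    linear_combination 4 * h

lemma hasDerivAt_equilibriumCoeff (γ r ψ0 : ℝ)
    (hD : 1 + 2*r + r^2 - (1/4) * ψ0 * ψ0 * r^2 ≠ 0) :
    HasDerivAt (equilibriumCoeff γ r ψ0)
      ((1/4) * r * (1 + r) * γ * (-2 * (1 + r) + ψ0 * r)
        / (1 + 2*r + r^2 - (1/4) * ψ0 * ψ0 * r^2)^2) ψ0 := by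
  have hnum : HasDerivAt (fun ψ : ℝ => γ * (1 + r - (1/2) * ψ * r)) (-(γ * r / 2)) ψ0 :=
    ((hasDerivAt_mul_const _).add_const (γ * (1 + r))).congr_of_eventuallyEq
      (.of_forall fun ψ => by ring)
  have hden : HasDerivAt (fun ψ : ℝ => 1 + 2*r + r^2 - (1/4) * ψ * ψ0 * r^2)
      (-(ψ0 * r^2 / 4)) ψ0 :=
    ((hasDerivAt_mul_const _).add_const (1 + 2*r + r^2)).congr_of_eventuallyEq
      (.of_forall fun ψ => by ring)
  exact (hnum.div hden hD).congr_deriv (by ring)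

lemma deriv_numerator_neg {γ r ψ0 : ℝ} (hγ : 0 < γ) (hr : 0 < r) (hψ0 : ψ0 ≤ 2) :
    (1/4) * r * (1 + r) * γ * (-2 * (1 + r) + ψ0 * r) < 0 :=
  mul_neg_of_pos_of_neg (by positivity) (by nlinarith)

end NoLearning

open NoLearning in
/-- without the learning channel, a dogmatic mutant with correct elasticity r°
and perceived correlation coefficient ψ(κ) has the unique equilibrium coefficient
α_BA = γ(1 + r° − (1/2)ψ(κ)r°)/(1 + 2r° + r°² − (1/4)ψ(κ)ψ(κ°)r°²) against a rational
best responder; its derivative in ψ(κ) at ψ(κ)=ψ(κ°) has the sign of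
(1/4)r°(1+r°)γ(−2(1+r°)+ψ(κ°)r°), which is strictly negative. -/
theorem no_learning_coefficient (γ r ψ0 : ℝ) (hγ : 0 < γ) (hr : 0 < r)
    (hψ0 : ψ0 ∈ Set.Ioc (0:ℝ) 1)
    (αBA : ℝ → ℝ)
    (hα : ∀ ψv, αBA ψv = γ * (1 + r - (1/2) * ψv * r)
        / (1 + 2*r + r^2 - (1/4) * ψv * ψ0 * r^2)) :
    (∀ ψv ∈ Set.Ioc (0:ℝ) 1, ∀ x : ℝ,
      x = (γ - (1/2) * r * ψv * ((γ - (1/2) * r * ψ0 * x) / (1 + r))) / (1 + r)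
        ↔ x = αBA ψv) ∧
    (∃ c : ℝ, 0 < c ∧
      deriv αBA ψ0 = c * ((1/4) * r * (1 + r) * γ * (-2 * (1 + r) + ψ0 * r))) ∧
    (1/4) * r * (1 + r) * γ * (-2 * (1 + r) + ψ0 * r) < 0 ∧
    deriv αBA ψ0 < 0 := by
  obtain ⟨hψ0pos, hψ0le⟩ := hψ0
  have hαeq : αBA = equilibriumCoeff γ r ψ0 := funext hα
  subst hαeq
  have hD0 := equilibriumCoeff_denom_pos (ψ := ψ0) (ψ0 := ψ0) hr.le (by nlinarith)
  have hderiv := (hasDerivAt_equilibriumCoeff γ r ψ0 hD0.ne').deriv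
  have hneg := deriv_numerator_neg hγ hr (ψ0 := ψ0) (by linarith)
  refine ⟨fun ψv ⟨hψpos, hψle⟩ x => ?_, ⟨_, inv_pos.mpr (pow_pos hD0 2), ?_⟩, hneg, ?_⟩
  · exact eq_linearBestReply_comp_iff (by linarith) (equilibriumCoeff_denom_pos hr.le (by nlinarith)).ne' x
  · rw [hderiv, div_eq_inv_mul]
  · rw [hderiv]
    exact div_neg_of_neg_of_pos hneg (by positivity)
end

section
/- In the 3×3 prize game with objective success probabilities U°(a_j, a_k) given by the matrix rows (0.25, 0.50, 0.70; 0.20, 0.40, 0.40; 0.15, 0.20, 0.20), and with mutant theory Θ_B = {F_H, F_L} whose KL divergences from the equilibrium data are KL(F_H) = λ·KL(0.4‖0.8) and KL(F_L) = λ·KL(0.4‖0.1) + (1−λ)·KL(0.2‖0.4), where KL(p‖q) = p·ln(p/q) + (1−p)·ln((1−p)/(1−q)): the threshold λ_h solving (1−λ)·KL(0.2‖0.4) = λ·(KL(0.4‖0.8) − KL(0.4‖0.1)) satisfies λ_h ∈ (0.5, 0.6), and for λ < λ_h model F_H has strictly smaller KL divergence than F_L while for λ > λ_h the order reverses. Moreover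 the mutant fitness 0.4λ + 0.2(1−λ) in the F_H-belief equilibrium exceeds the resident fitness 0.25 iff λ > 0.25. Hence the resident correct theory is evolutionarily stable at λ=0 and λ=1 but fragile for λ ∈ (0.25, λ_h). -/
/-!
Each of the three divergences is a rational combination of `log 2` and `log 3`. Writing
`A = KL(0.2‖0.4)` and `B = KL(0.4‖0.8) − KL(0.4‖0.1)`, the threshold equation is linear in `λ`,
and `(1 − λ) A − λ B = (λ_h − λ)(A + B)` with `A + B = (2/5) log (3/2) > 0`, so the comparison of
the two models flips exactly at `λ_h`. Comparing `λ_h` with `1/2` and `3/5` the same way reduces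
the bounds on `λ_h` to `3⁵ < 2⁸` and `2⁴¹ < 3²⁶`.
-/

open Real

section Threshold

variable {K : Type*} [Field K] [LinearOrder K] [IsStrictOrderedRing K] {A B t x : K}

lemma lt_threshold_iff (hAB : 0 < A + B) (ht : (1 - t) * A = t * B) :
    x * B < (1 - x) * A ↔ x < t := by
  rw [← sub_pos, show (1 - x) * A - x * B = (t - x) * (A + B) by linear_combination ht,
    mul_pos_iff_of_pos_right hAB, sub_pos]

lemma threshold_lt_iff (hAB : 0 < A + B) (ht : (1 - t) * A = t * B) :
    (1 - x) * A < x * B ↔ t < x := by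
  rw [← sub_pos, show x * B - (1 - x) * A = (x - t) * (A + B) by linear_combination -ht,
    mul_pos_iff_of_pos_right hAB, sub_pos]

end Threshold

lemma natCast_mul_log_lt_of_pow_lt {a b : ℝ} (ha : 0 < a) {m n : ℕ} (h : a ^ m < b ^ n) :
    m * log a < n * log b := by
  rw [← Real.log_pow, ← Real.log_pow]
  exact Real.log_lt_log (pow_pos ha m) h

noncomputable def bernoulliKL (p q : ℝ) : ℝ :=
  p * log (p / q) + (1 - p) * log ((1 - p) / (1 - q))

lemma bernoulliKL_point2_point4 : bernoulliKL 0.2 0.4 = 7 / 5 * log 2 - 4 / 5 * log 3 := by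
  rw [bernoulliKL, show (0.2 : ℝ) / 0.4 = 2⁻¹ by norm_num,
    show (1 - 0.2 : ℝ) / (1 - 0.4) = 2 ^ 2 / 3 by norm_num,
    Real.log_inv, Real.log_div (by norm_num) (by norm_num), Real.log_pow]
  push_cast
  ring

lemma bernoulliKL_point4_point8 : bernoulliKL 0.4 0.8 = -2 / 5 * log 2 + 3 / 5 * log 3 := by
  rw [bernoulliKL, show (0.4 : ℝ) / 0.8 = 2⁻¹ by norm_num,
    show (1 - 0.4 : ℝ) / (1 - 0.8) = 3 by norm_num, Real.log_inv]
  ring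

lemma bernoulliKL_point4_point1 : bernoulliKL 0.4 0.1 = 7 / 5 * log 2 - 3 / 5 * log 3 := by
  rw [bernoulliKL, show (0.4 : ℝ) / 0.1 = 2 ^ 2 by norm_num,
    show (1 - 0.4 : ℝ) / (1 - 0.1) = 2 / 3 by norm_num,
    Real.log_pow, Real.log_div (by norm_num) (by norm_num)]
  push_cast
  ring

/-- non-monotonic stability in matching assortativity in the 3×3 prize game.
The threshold λ_h solving (1−λ)KL(0.2‖0.4) = λ(KL(0.4‖0.8) − KL(0.4‖0.1)) lies in
(0.5, 0.6); for λ < λ_h model F_H has strictly smaller weighted KL divergence than F_L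
and for λ > λ_h the order reverses; and mutant fitness 0.4λ + 0.2(1−λ) exceeds the
resident fitness 0.25 iff λ > 0.25. -/
theorem nonmonotonic_stability
    (KL : ℝ → ℝ → ℝ)
    (hKL : ∀ p q : ℝ, KL p q = p * Real.log (p / q) + (1 - p) * Real.log ((1 - p) / (1 - q)))
    (lamh : ℝ)
    (hlamh : (1 - lamh) * KL 0.2 0.4 = lamh * (KL 0.4 0.8 - KL 0.4 0.1)) :
    lamh ∈ Set.Ioo (0.5 : ℝ) 0.6 ∧
    (∀ lam ∈ Set.Icc (0:ℝ) 1, lam < lamh →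
      lam * KL 0.4 0.8 < lam * KL 0.4 0.1 + (1 - lam) * KL 0.2 0.4) ∧
    (∀ lam ∈ Set.Icc (0:ℝ) 1, lamh < lam →
      lam * KL 0.4 0.1 + (1 - lam) * KL 0.2 0.4 < lam * KL 0.4 0.8) ∧
    (∀ lam : ℝ, 0.4 * lam + 0.2 * (1 - lam) > 0.25 ↔ lam > 0.25) := by
  obtain rfl : KL = bernoulliKL := funext₂ hKL
  have log_two_lt_log_three : log 2 < log 3 := Real.log_lt_log two_pos (by norm_num)
  have h243_256 := natCast_mul_log_lt_of_pow_lt (m := 5) (n := 8) three_pos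
    (by norm_num : (3 : ℝ) ^ 5 < 2 ^ 8)
  have h2_41_3_26 := natCast_mul_log_lt_of_pow_lt (m := 41) (n := 26) two_pos
    (by norm_num : (2 : ℝ) ^ 41 < 3 ^ 26)
  push_cast at h243_256 h2_41_3_26
  have hAB : 0 < bernoulliKL 0.2 0.4 + (bernoulliKL 0.4 0.8 - bernoulliKL 0.4 0.1) := by
    rw [bernoulliKL_point2_point4, bernoulliKL_point4_point8, bernoulliKL_point4_point1]
    linarith
  refine ⟨⟨?_, ?_⟩, fun lam _ h => ?_, fun lam _ h => ?_, fun lam => ?_⟩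
  · refine (lt_threshold_iff hAB hlamh).1 ?_
    rw [bernoulliKL_point2_point4, bernoulliKL_point4_point8, bernoulliKL_point4_point1]
    linarith
  · refine (threshold_lt_iff hAB hlamh).1 ?_
    rw [bernoulliKL_point2_point4, bernoulliKL_point4_point8, bernoulliKL_point4_point1]
    linarith
  · linarith [(lt_threshold_iff hAB hlamh).2 h]
  · linarith [(threshold_lt_iff hAB hlamh).2 h]
  · constructor <;> intro h <;> linarith
end

section
/- An analogy reasoner in the centipede game who believes the opponent drops with probability x ∈ [0,1] at every even node finds, given that role-1 outcomes always reach terminal node z_K (probability 1/2 of being P1) and role-2 matches end immediately, that the Bernoulli-path log-likelihood objective reduces to minimizing (1/2)·ln(1/((1−x)^{K/2−1}·x)) over x ∈ (0,1), whose unique minimizer is x = 2/K (for K ≥ 4 even). Moreover, under the belief that the opponent continues with probability 1 − 2/K at each future node, choosing Across at any node dominates Drop whenever (1 − 2/K)·g − (2/K)·ℓ > 0, i.e. whenever g > 2ℓ/(K−2). -/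
/-!
The objective is `-(1/2) log ((1 - x)^n x)` with `n = K/2 - 1`, so minimizing it means maximizing
the likelihood `(1 - x)^n x`. With `p = 1/(n+1)`, the bound `log t < t - 1` (for `t ≠ 1`) applied to
`(1 - x)/(1 - p)` with weight `n` and to `x/p` with weight `1` gives a sum of right-hand sides that
vanishes, so the log-likelihood ratio is negative unless `x = p`; for even `K` we have `p = 2/K`.
-/

open Real

lemma pow_one_sub_mul_lt_of_ne (n : ℕ) {x : ℝ} (hx₀ : 0 < x) (hx₁ : x < 1)
    (hx : x ≠ 1 / (n + 1)) :
    (1 - x) ^ n * x < (1 - 1 / (n + 1)) ^ n * (1 / (n + 1)) := by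
  rcases n.eq_zero_or_pos with rfl | hn
  · simpa using hx₁
  have hn' : (0 : ℝ) < n := by exact_mod_cast hn
  set p : ℝ := 1 / (n + 1) with hp
  have hp₀ : 0 < p := by positivity
  have hp₁ : 0 < 1 - p := by
    rw [hp, sub_pos, div_lt_one (by positivity)]
    linarith
  have hx₁' : 0 < 1 - x := by linarith
  have h_tail : log ((1 - x) / (1 - p)) ≤ (1 - x) / (1 - p) - 1 :=
    log_le_sub_one_of_pos (by positivity)
  have h_head : log (x / p) < x / p - 1 :=
    log_lt_sub_one_of_pos (by positivity) fun h => hx ((div_eq_one_iff_eq hp₀.ne').mp h)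
  -- `n / (1 - p) = 1 / p = n + 1`, so the linear bounds cancel exactly.
  have h_cancel : (n : ℝ) * ((1 - x) / (1 - p) - 1) + (x / p - 1) = 0 := by
    rw [hp]
    field_simp [hn'.ne']
    ring
  have h_log : log ((1 - x) ^ n * x) < log ((1 - p) ^ n * p) := by
    rw [log_mul (by positivity) hx₀.ne', log_mul (by positivity) hp₀.ne', log_pow, log_pow]
    rw [log_div hx₁'.ne' hp₁.ne'] at h_tail
    rw [log_div hx₀.ne' hp₀.ne'] at h_head
    nlinarith [mul_le_mul_of_nonneg_left h_tail n.cast_nonneg]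
  exact (log_lt_log_iff (by positivity) (by positivity)).mp h_log

lemma two_div_eq_one_div_half_sub_one_add_one {K : ℕ} (hK : 2 ≤ K) (hKeven : Even K) :
    (2 : ℝ) / K = 1 / (((K / 2 - 1 : ℕ) : ℝ) + 1) := by
  obtain ⟨m, rfl⟩ := hKeven
  have hm : (m + m) / 2 - 1 + 1 = m := by omega
  rw [← Nat.cast_add_one, hm]
  push_cast
  field_simp
  ring

lemma one_sub_div_mul_sub_div_mul_pos_iff {K c : ℝ} (hK : 0 < K) (hcK : c < K) (g l : ℝ) :
    (1 - c / K) * g - (c / K) * l > 0 ↔ g > c * l / (K - c) := by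
  have h : (1 - c / K) * g - (c / K) * l = ((K - c) * g - c * l) / K := by
    field_simp
  rw [gt_iff_lt, gt_iff_lt, h, div_pos_iff_of_pos_right hK, div_lt_iff₀ (sub_pos.mpr hcK)]
  constructor <;> intro <;> linarith

/-- the analogy reasoner's KL-minimization objective
(1/2)·ln(1/((1−x)^{K/2−1}·x)) over x ∈ (0,1) has the unique minimizer x = 2/K, and the
subjective comparison of Across versus Drop, (1−2/K)g − (2/K)ℓ > 0, holds iff
g > 2ℓ/(K−2). -/
theorem analogy_inference_centipede (K : ℕ) (hK : 4 ≤ K) (hKeven : Even K)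
    (f : ℝ → ℝ)
    (hf : ∀ x, f x = (1/2) * Real.log (1 / ((1 - x) ^ (K / 2 - 1) * x))) :
    (∀ x ∈ Set.Ioo (0:ℝ) 1, x ≠ 2 / (K : ℝ) → f (2 / (K : ℝ)) < f x) ∧
    (∀ g l : ℝ, 0 < g → 0 < l →
      ((1 - 2 / (K : ℝ)) * g - (2 / (K : ℝ)) * l > 0 ↔ g > 2 * l / ((K : ℝ) - 2))) := by
  have hKR : (4 : ℝ) ≤ K := by exact_mod_cast hK
  have h_two_div := two_div_eq_one_div_half_sub_one_add_one (by omega) hKeven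
  refine ⟨fun x ⟨hx₀, hx₁⟩ hx => ?_, fun g l _ _ =>
    one_sub_div_mul_sub_div_mul_pos_iff (by linarith) (by linarith) g l⟩
  rw [h_two_div] at hx ⊢
  have h_lt := pow_one_sub_mul_lt_of_ne (K / 2 - 1) hx₀ hx₁ hx
  have h_log := log_lt_log (by positivity) h_lt
  rw [hf, hf]
  simp only [one_div, log_inv] at h_log ⊢
  linarith
end
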